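/- arXiv:1401.3128 — 4 statements merged into one kernel-verified Lean document; each statement's English description precedes it below -/
import Mathlib

section
/- Suppose g and h are continuous functions on ℂ, and for each natural number n, z_n ∈ ℂ satisfies z_n^n · g(z_n) + h(z_n) = 0. If the sequence (z_n) converges to z₀ with |z₀| > 1, then g(z₀) = 0; and if |z₀| < 1, then h(z₀) = 0. -/
open Filter Topology

/-! If `|z₀| < 1` then `z_nⁿ → 0`, so `h(z_n) = -z_nⁿ g(z_n) → 0`; if `|z₀| > 1` the same
argument applied to `1/z_n` gives `z_n⁻ⁿ → 0`, so `g(z_n) = -z_n⁻ⁿ h(z_n) → 0`. Continuity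
identifies the limits with `h(z₀)` and `g(z₀)`. -/

theorem tendsto_pow_self_nhds_zero_of_norm_lt_one {R : Type*} [SeminormedRing R] [NormOneClass R]
    {u : ℕ → R} {a : R} (hu : Tendsto u atTop (𝓝 a)) (ha : ‖a‖ < 1) :
    Tendsto (fun n => u n ^ n) atTop (𝓝 0) := by
  obtain ⟨r, har, hr1⟩ := exists_between ha
  have hsmall : ∀ᶠ n in atTop, ‖u n‖ < r := hu.norm.eventually (eventually_lt_nhds har)
  refine squeeze_zero_norm' ?_
    (tendsto_pow_atTop_nhds_zero_of_lt_one ((norm_nonneg a).trans har.le) hr1)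
  filter_upwards [hsmall] with n hn
  exact (norm_pow_le _ n).trans (pow_le_pow_left₀ (norm_nonneg _) hn.le n)

theorem tendsto_inv_pow_self_nhds_zero_of_one_lt_norm {K : Type*} [NormedDivisionRing K]
    {u : ℕ → K} {a : K} (hu : Tendsto u atTop (𝓝 a)) (ha : 1 < ‖a‖) :
    Tendsto (fun n => (u n ^ n)⁻¹) atTop (𝓝 0) := by
  have ha₀ : a ≠ 0 := norm_pos_iff.mp (one_pos.trans ha)
  have hinv : ‖a⁻¹‖ < 1 := by rw [norm_inv]; exact inv_lt_one_of_one_lt₀ ha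
  simpa only [Pi.inv_apply, inv_pow] using
    tendsto_pow_self_nhds_zero_of_norm_lt_one (hu.inv₀ ha₀) hinv

/-- If `g, h : ℂ → ℂ` are continuous, `z_n` is a root of `fₙ(t) = tⁿ·g(t) + h(t)`
for every `n`, and `z_n → z₀`, then `g(z₀) = 0` if `|z₀| > 1`, while `h(z₀) = 0`
if `|z₀| < 1`. -/
theorem root_limit_of_pow_mul_add (g h : ℂ → ℂ) (hg : Continuous g) (hh : Continuous h)
    (z : ℕ → ℂ) (hroot : ∀ n : ℕ, (z n) ^ n * g (z n) + h (z n) = 0)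
    (z₀ : ℂ) (hlim : Tendsto z atTop (nhds z₀)) :
    (1 < ‖z₀‖ → g z₀ = 0) ∧ (‖z₀‖ < 1 → h z₀ = 0) := by
  have hgz := (hg.tendsto z₀).comp hlim
  have hhz := (hh.tendsto z₀).comp hlim
  have hh_eq : ∀ n, -(z n ^ n * g (z n)) = h (z n) := fun n =>
    neg_eq_of_add_eq_zero_right (hroot n)
  constructor
  · intro hz₀
    have hne : ∀ᶠ n in atTop, z n ≠ 0 :=
      hlim.eventually_ne (norm_pos_iff.mp (one_pos.trans hz₀))
    have hg_eq : ∀ᶠ n in atTop, -(z n ^ n)⁻¹ * h (z n) = g (z n) := by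
      filter_upwards [hne] with n hn
      rw [← hh_eq n, neg_mul_neg, inv_mul_cancel_left₀ (pow_ne_zero n hn)]
    have hlim_g : Tendsto (fun n => -(z n ^ n)⁻¹ * h (z n)) atTop (𝓝 0) := by
      simpa using (tendsto_inv_pow_self_nhds_zero_of_one_lt_norm hlim hz₀).neg.mul hhz
    exact tendsto_nhds_unique hgz (hlim_g.congr' hg_eq)
  · intro hz₀
    have hlim_h : Tendsto (fun n => -(z n ^ n * g (z n))) atTop (𝓝 0) := by
      simpa using ((tendsto_pow_self_nhds_zero_of_norm_lt_one hlim hz₀).mul hgz).neg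
    exact tendsto_nhds_unique hhz (hlim_h.congr hh_eq)
end

section
/- Let T be a tree with a splitting edge e = (v₁, v₂), so that removing e yields subtrees R (containing v₁) and S (containing v₂). Then cox_T(t) = cox_R(t)·cox_S(t) − t·cox_{R̃}(t)·cox_{S̃}(t), where R̃ and S̃ are the forests obtained from R and S by deleting the vertices v₁ and v₂ respectively. -/
/-!
Since the Gram matrix `Ǧ` is unitriangular, `cox_Γ(t) = det (Ǧ + t Ǧᵀ)`. Listing the vertices
of `T` as those of `R` followed by those of `S`, the matrix `Ǧ + t Ǧᵀ` of `T` is block diagonal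
with the blocks of `R` and `S`, except for the entries at `(v₁, v₂)` and `(v₂, v₁)`, whose
product is `t`. Expanding the determinant in these two entries gives the formula.
-/

open Matrix Polynomial

/-- The Coxeter polynomial of a graph given by its adjacency matrix `A`
(indexed by a linearly ordered finite vertex set), defined as the
characteristic polynomial of the Coxeter matrix `-Ǧ·Ǧ⁻ᵀ`, where `Ǧ` is the
upper triangular Gram matrix of the graph. -/
noncomputable def coxPoly {V : Type} [Fintype V] [LinearOrder V]
    (A : Matrix V V ℤ) : Polynomial ℤ :=
  let G : Matrix V V ℤ := Matrix.of fun i j => if i = j then 1 else if i < j then -A i j else 0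
  (-(G * Gᵀ⁻¹)).charpoly
/-- The Coxeter polynomial of the subgraph of `G` induced on a finset `s`
of vertices. -/
noncomputable def coxOf {V : Type} [Fintype V] [LinearOrder V]
    (G : SimpleGraph V) [DecidableRel G.Adj] (s : Finset V) : Polynomial ℤ :=
  coxPoly (Matrix.of fun i j : {x // x ∈ s} => if G.Adj i.1 j.1 then (1 : ℤ) else 0)

namespace SimpleGraph

variable {V : Type} {G : SimpleGraph V} {u v w x y : V}

theorem Reachable.reachable_deleteEdges_or (h : G.Reachable u w) :
    (G.deleteEdges {s(u, v)}).Reachable u w ∨ (G.deleteEdges {s(u, v)}).Reachable v w := by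
  rw [reachable_iff_reflTransGen] at h
  induction h with
  | refl => exact .inl .rfl
  | @tail x y _ hxy ih =>
    by_cases he : s(x, y) = s(u, v)
    · rcases Sym2.eq_iff.mp he with ⟨-, rfl⟩ | ⟨-, rfl⟩
      · exact .inr .rfl
      · exact .inl .rfl
    · have hxy' : (G.deleteEdges {s(u, v)}).Adj x y := deleteEdges_adj.mpr ⟨hxy, he⟩
      exact ih.imp (·.trans hxy'.reachable) (·.trans hxy'.reachable)

theorem IsBridge.eq_and_eq_of_adj (hb : G.IsBridge s(u, v))
    (hx : (G.deleteEdges {s(u, v)}).Reachable u x) (hy : (G.deleteEdges {s(u, v)}).Reachable v y)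
    (hxy : G.Adj x y) : x = u ∧ y = v := by
  rw [isBridge_iff] at hb
  by_cases he : s(x, y) = s(u, v)
  · rcases Sym2.eq_iff.mp he with h | ⟨rfl, -⟩
    · exact h
    · exact absurd hx hb
  · have hxy' : (G.deleteEdges {s(u, v)}).Adj x y := deleteEdges_adj.mpr ⟨hxy, he⟩
    exact absurd ((hx.trans hxy'.reachable).trans hy.symm) hb

end SimpleGraph

namespace Matrix

variable {K : Type} [CommRing K]

theorem det_submatrix_eq_of_range_eq {n ι κ : Type} [Fintype ι] [DecidableEq ι] [Fintype κ]
    [DecidableEq κ] (M : Matrix n n K) {f : ι → n} {g : κ → n} (hf : f.Injective)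
    (hg : g.Injective) (h : Set.range f = Set.range g) :
    (M.submatrix f f).det = (M.submatrix g g).det := by
  let e : ι ≃ κ :=
    (Equiv.ofInjective f hf).trans ((Equiv.setCongr h).trans (Equiv.ofInjective g hg).symm)
  have he : ∀ x, g (e x) = f x := fun x => by simp [e, Equiv.apply_ofInjective_symm]
  rw [← det_submatrix_equiv_self e (M.submatrix g g), submatrix_submatrix]
  simp only [Function.comp_def, he]

variable {m n : Type} [Fintype m] [Fintype n] [DecidableEq m] [DecidableEq n]

theorem det_updateRow_single_self (M : Matrix n n K) (i : n) :
    (M.updateRow i (Pi.single i 1)).det = (M.submatrix ((↑) : {x // x ≠ i} → n) (↑)).det := by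
  rw [twoBlockTriangular_det' _ (· = i) fun x hx y hy => by simp [hx, Ne.symm hy]]
  have : Unique {x // x = i} := ⟨⟨⟨i, rfl⟩⟩, fun x => Subtype.ext x.2⟩
  simp only [det_unique, toSquareBlockProp_def, of_apply, (default : {x // x = i}).2,
    updateRow_self, Pi.single_eq_same, one_mul]
  congr 1
  ext x y
  simp [updateRow_ne x.2]

theorem det_fromBlocks_single (A : Matrix m m K) (B : Matrix n n K) (i : m) (j : n) (a b : K) :
    (fromBlocks A (single i j a) (single j i b) B).det = A.det * B.det - a * b *
      (A.submatrix ((↑) : {x // x ≠ i} → m) (↑)).det *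
      (B.submatrix ((↑) : {x // x ≠ j} → n) (↑)).det := by
  -- Expand linearly in row `inl i`, then in row `inr j`; the surviving term is, after swapping
  -- these two rows, block diagonal.
  set N₀ := fromBlocks A 0 (single j i b) B
  set N₁ := fromBlocks (A.updateRow i 0) (single i j 1) 0 B
  have h₀ : fromBlocks A (single i j a) (single j i b) B =
      N₀.updateRow (.inl i) (N₀ (.inl i) + a • Pi.single (.inr j) 1) := by
    ext (x | x) (y | y) <;>
      simp only [N₀, updateRow_apply, Pi.single_apply, single_apply, fromBlocks_apply₁₁,
        fromBlocks_apply₁₂, fromBlocks_apply₂₁, fromBlocks_apply₂₂, Pi.add_apply, Pi.smul_apply] <;>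
      split_ifs <;> simp_all
  have h₁ : N₀.updateRow (.inl i) (Pi.single (.inr j) 1) =
      N₁.updateRow (.inr j) (N₁ (.inr j) + b • Pi.single (.inl i) 1) := by
    ext (x | x) (y | y) <;>
      simp only [N₀, N₁, updateRow_apply, Pi.single_apply, single_apply, fromBlocks_apply₁₁,
        fromBlocks_apply₁₂, fromBlocks_apply₂₁, fromBlocks_apply₂₂, Pi.add_apply, Pi.smul_apply] <;>
      split_ifs <;> simp_all
  have h₂ : N₁.updateRow (.inr j) (Pi.single (.inl i) 1) =
      (fromBlocks (A.updateRow i (Pi.single i 1)) 0 0 (B.updateRow j (Pi.single j 1))).submatrix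
        (Equiv.swap (.inl i) (.inr j)) id := by
    ext (x | x) (y | y) <;>
      simp only [N₁, updateRow_apply, Pi.single_apply, single_apply, fromBlocks_apply₁₁,
        fromBlocks_apply₁₂, fromBlocks_apply₂₁, fromBlocks_apply₂₂, submatrix_apply, id,
        Equiv.swap_apply_def] <;>
      split_ifs <;> simp_all
  rw [h₀, det_updateRow_add, updateRow_eq_self, det_fromBlocks_zero₁₂, det_updateRow_smul, h₁,
    det_updateRow_add, updateRow_eq_self, det_fromBlocks_zero₂₁,
    det_eq_zero_of_row_eq_zero (A := A.updateRow i 0) i fun _ => by simp, det_updateRow_smul, h₂,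
    det_permute, Equiv.Perm.sign_swap Sum.inl_ne_inr, det_fromBlocks_zero₂₁,
    det_updateRow_single_self, det_updateRow_single_self]
  push_cast
  ring

theorem det_eq_of_offBlock_single (M : Matrix n n K) (s : Finset n) {u w : n} (hu : u ∈ s)
    (hw : w ∉ s) (h : ∀ x ∈ s, ∀ y ∉ s, x ≠ u ∨ y ≠ w → M x y = 0 ∧ M y x = 0) :
    M.det = (M.submatrix ((↑) : s → n) (↑)).det * (M.submatrix ((↑) : ↥sᶜ → n) (↑)).det -
      M u w * M w u * (M.submatrix ((↑) : ↥(s.erase u) → n) (↑)).det *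
        (M.submatrix ((↑) : ↥(sᶜ.erase w) → n) (↑)).det := by
  have hB : toBlock M (· ∈ s) (· ∉ s) = single ⟨u, hu⟩ ⟨w, hw⟩ (M u w) := by
    ext ⟨x, hx⟩ ⟨y, hy⟩
    rw [toBlock_apply, single_apply]
    split_ifs with hxy
    · obtain ⟨⟨⟩, ⟨⟩⟩ := hxy
      rfl
    · exact (h x hx y hy (by grind)).1
  have hC : toBlock M (· ∉ s) (· ∈ s) = single ⟨w, hw⟩ ⟨u, hu⟩ (M w u) := by
    ext ⟨x, hx⟩ ⟨y, hy⟩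
    rw [toBlock_apply, single_apply]
    split_ifs with hxy
    · obtain ⟨⟨⟩, ⟨⟩⟩ := hxy
      rfl
    · exact (h y hy x hx (by grind)).2
  rw [det_toBlock M (· ∈ s), hB, hC]
  simp only [det_fromBlocks_single, toBlock, submatrix_submatrix]
  -- The blocks are indexed by predicate subtypes (with their own `Fintype` instances), the
  -- statement by finset subtypes.
  congr 2
  · convert det_submatrix_eq_of_range_eq M Subtype.val_injective Subtype.val_injective _
    ext x
    simp
  · convert det_submatrix_eq_of_range_eq M Subtype.val_injective Subtype.val_injective _
    ext x
    simp
  · congr 1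
    convert det_submatrix_eq_of_range_eq M (Subtype.val_injective.comp Subtype.val_injective)
      Subtype.val_injective _
    ext x
    simp
  · convert det_submatrix_eq_of_range_eq M (Subtype.val_injective.comp Subtype.val_injective)
      Subtype.val_injective _
    ext x
    simp

end Matrix

section Coxeter

variable {V : Type} [LinearOrder V]

def coxGram (A : Matrix V V ℤ) : Matrix V V ℤ :=
  of fun i j => if i = j then 1 else if i < j then -A i j else 0

noncomputable def coxPencil (A : Matrix V V ℤ) : Matrix V V ℤ[X] :=
  (coxGram A).map C + (X : ℤ[X]) • (coxGram A)ᵀ.map C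

theorem det_coxGram [Fintype V] (A : Matrix V V ℤ) : (coxGram A).det = 1 := by
  rw [det_of_isUpperTriangular fun i j (hji : j < i) => by simp [coxGram, hji.ne', hji.not_gt]]
  simp [coxGram]

theorem coxPoly_eq_det_coxPencil [Fintype V] (A : Matrix V V ℤ) :
    coxPoly A = (coxPencil A).det := by
  set G := coxGram A
  have hG : Gᵀ⁻¹ * Gᵀ = 1 := nonsing_inv_mul _ (by simp [G, det_coxGram])
  have hchar : charmatrix (-(G * Gᵀ⁻¹)) * Gᵀ.map C = coxPencil A := by
    rw [charmatrix, map_neg, sub_neg_eq_add, add_mul, RingHom.mapMatrix_apply, ← Matrix.map_mul,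
      Matrix.mul_assoc, hG, Matrix.mul_one, scalar_apply, ← smul_one_eq_diagonal, smul_mul,
      Matrix.one_mul, coxPencil, add_comm]
  have hdet : (Gᵀ.map C).det = 1 := by
    rw [← RingHom.mapMatrix_apply, ← RingHom.map_det, det_transpose, det_coxGram, map_one]
  calc coxPoly A = (charmatrix (-(G * Gᵀ⁻¹))).det := rfl
    _ = (coxPencil A).det := by rw [← hchar, det_mul, hdet, mul_one]

theorem coxPencil_submatrix {W : Type} [LinearOrder W] (A : Matrix V V ℤ) {f : W → V}
    (hf : StrictMono f) : coxPencil (A.submatrix f f) = (coxPencil A).submatrix f f := by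
  ext i j
  simp [coxPencil, coxGram, hf.lt_iff_lt, hf.injective.eq_iff]

theorem coxPencil_apply_of_lt (A : Matrix V V ℤ) {x y : V} (h : x < y) :
    coxPencil A x y = -C (A x y) := by
  simp [coxPencil, coxGram, h, h.ne, h.ne', h.not_gt]

theorem coxPencil_apply_of_gt (A : Matrix V V ℤ) {x y : V} (h : y < x) :
    coxPencil A x y = -(X * C (A y x)) := by
  simp [coxPencil, coxGram, h, h.ne, h.ne', h.not_gt]

theorem coxPencil_eq_zero (A : Matrix V V ℤ) {x y : V} (hxy : x ≠ y) (h₁ : A x y = 0)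
    (h₂ : A y x = 0) : coxPencil A x y = 0 := by
  rcases hxy.lt_or_gt with h | h
  · simp [coxPencil_apply_of_lt A h, h₁]
  · simp [coxPencil_apply_of_gt A h, h₂]

theorem coxPencil_mul_coxPencil {A : Matrix V V ℤ} (hA : A.IsSymm) {x y : V} (hxy : x ≠ y) :
    coxPencil A x y * coxPencil A y x = X * C (A x y ^ 2) := by
  rcases hxy.lt_or_gt with h | h
  · rw [coxPencil_apply_of_lt A h, coxPencil_apply_of_gt A h, map_pow]
    ring
  · rw [coxPencil_apply_of_gt A h, coxPencil_apply_of_lt A h, hA.apply, map_pow]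
    ring

theorem coxOf_eq_det [Fintype V] (G : SimpleGraph V) [DecidableRel G.Adj] (s : Finset V) :
    coxOf G s = ((coxPencil (G.adjMatrix ℤ)).submatrix ((↑) : s → V) (↑)).det := by
  rw [coxOf, coxPoly_eq_det_coxPencil, ← coxPencil_submatrix _ (Subtype.strictMono_coe _)]
  rfl

theorem coxOf_univ [Fintype V] (G : SimpleGraph V) [DecidableRel G.Adj] :
    coxOf G Finset.univ = (coxPencil (G.adjMatrix ℤ)).det := by
  rw [coxOf_eq_det]
  exact det_submatrix_equiv_self (Equiv.subtypeUnivEquiv Finset.mem_univ) _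

end Coxeter

/-- **Subbotin–Sumin splitting formula.** If `e = (v₁, v₂)` is an edge of a
tree `T`, splitting it into the subtree `R` containing `v₁` and the subtree
`S` containing `v₂`, then
`cox_T = cox_R · cox_S − t · cox_R̃ · cox_S̃`, where `R̃ = R − v₁`, `S̃ = S − v₂`. -/
theorem coxPoly_splitting_edge {V : Type} [Fintype V] [LinearOrder V]
    (G : SimpleGraph V) [DecidableRel G.Adj] (hT : G.IsTree)
    (v₁ v₂ : V) (he : G.Adj v₁ v₂) (R S : Finset V)
    (hR : ∀ w, w ∈ R ↔ (G.deleteEdges {s(v₁, v₂)}).Reachable v₁ w)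
    (hS : ∀ w, w ∈ S ↔ (G.deleteEdges {s(v₁, v₂)}).Reachable v₂ w) :
    coxOf G Finset.univ =
      coxOf G R * coxOf G S - X * (coxOf G (R.erase v₁) * coxOf G (S.erase v₂)) := by
  have hb : G.IsBridge s(v₁, v₂) :=
    SimpleGraph.isAcyclic_iff_forall_adj_isBridge.mp hT.isAcyclic he
  have hv₁ : v₁ ∈ R := (hR v₁).mpr .rfl
  have hv₂ : v₂ ∉ R := fun h => hb ((hR v₂).mp h)
  obtain rfl : S = Rᶜ := by
    ext w
    rw [Finset.mem_compl, hR, hS]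
    exact ⟨fun h h' => hb (h'.trans h.symm),
      (hT.connected v₁ w).reachable_deleteEdges_or.resolve_left⟩
  rw [coxOf_univ, det_eq_of_offBlock_single _ R hv₁ hv₂ ?_,
    coxPencil_mul_coxPencil G.isSymm_adjMatrix he.ne]
  · simp only [coxOf_eq_det, SimpleGraph.adjMatrix_apply, if_pos he, one_pow, map_one, mul_one]
    ring
  intro x hx y hy hxy
  have hne : x ≠ y := fun h => hy (h ▸ hx)
  have hadj : ¬ G.Adj x y := fun hadj => by
    obtain ⟨rfl, rfl⟩ :=
      hb.eq_and_eq_of_adj ((hR x).mp hx) ((hS y).mp (Finset.mem_compl.mpr hy)) hadj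
    simp at hxy
  exact ⟨coxPencil_eq_zero _ hne (by simp [hadj]) (by simp [hadj, G.adj_comm]),
    coxPencil_eq_zero _ hne.symm (by simp [hadj, G.adj_comm]) (by simp [hadj])⟩
end

section
/- For each p ≥ 2, the polynomial t^p − 2t^{p-1} − 1 has a unique real root ρ_p in (2, 3), this root is the largest root in absolute value, and ρ_p → 2 as p → ∞. -/
/-!
Writing the equation as `x ^ n * (x - 2) = 1` with `n = p - 1`, the left side is strictly
increasing on `[2, ∞)` and passes from `0` to `3 ^ n` on `[2, 3]`, which gives the unique root
`ρ` there. A complex root `z` satisfies `‖z‖ ^ n * (‖z‖ - 2) ≤ 1` by the triangle inequality, so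
monotonicity forces `‖z‖ ≤ ρ`. Finally `2 ^ n * (ρ - 2) ≤ ρ ^ n * (ρ - 2) = 1` squeezes `ρ` to `2`.
-/

open Filter Set Topology

theorem pow_succ_sub_two_mul_pow_sub_one_eq_zero_iff {R : Type*} [CommRing R] (x : R) (n : ℕ) :
    x ^ (n + 1) - 2 * x ^ n - 1 = 0 ↔ x ^ n * (x - 2) = 1 := by
  constructor <;> intro h <;> linear_combination h

theorem strictMonoOn_pow_mul_sub_two (n : ℕ) :
    StrictMonoOn (fun x : ℝ => x ^ n * (x - 2)) (Ici 2) := by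
  intro a ha b hb hab
  simp only [mem_Ici] at ha hb
  calc a ^ n * (a - 2) ≤ b ^ n * (a - 2) := by gcongr
    _ < b ^ n * (b - 2) := by gcongr

theorem norm_pow_mul_norm_sub_two_le_one {𝕜 : Type*} [NormedDivisionRing 𝕜] {z : 𝕜} {n : ℕ}
    (hz : z ^ (n + 1) = 2 * z ^ n + 1) : ‖z‖ ^ n * (‖z‖ - 2) ≤ 1 := by
  have : ‖z‖ ^ (n + 1) ≤ 2 * ‖z‖ ^ n + 1 :=
    calc ‖z‖ ^ (n + 1) = ‖z ^ n + z ^ n + 1‖ := by rw [← norm_pow, hz, two_mul]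
      _ ≤ ‖z ^ n‖ + ‖z ^ n‖ + ‖(1 : 𝕜)‖ := norm_add₃_le
      _ = 2 * ‖z‖ ^ n + 1 := by rw [norm_pow, norm_one]; ring
  linear_combination this

theorem exists_pow_mul_sub_two_eq_one (n : ℕ) : ∃ x ∈ Ioc (2 : ℝ) 3, x ^ n * (x - 2) = 1 := by
  have hcont : ContinuousOn (fun x : ℝ => x ^ n * (x - 2)) (Icc 2 3) := by fun_prop
  have hone : (1 : ℝ) ∈ Icc (2 ^ n * (2 - 2)) (3 ^ n * (3 - 2)) :=
    ⟨by norm_num, by norm_num [one_le_pow₀]⟩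
  obtain ⟨x, hx, hfx⟩ := intermediate_value_Icc (by norm_num) hcont hone
  refine ⟨x, ⟨hx.1.lt_of_ne ?_, hx.2⟩, hfx⟩
  rintro rfl
  norm_num at hfx

/-- The paper's `ρ_{n+1}`: the root in `[2, ∞)` of `t ^ (n + 1) - 2 t ^ n - 1`. -/
noncomputable def rootAboveTwo (n : ℕ) : ℝ :=
  (exists_pow_mul_sub_two_eq_one n).choose

namespace rootAboveTwo

variable (n : ℕ)

theorem mem_Ioc : rootAboveTwo n ∈ Ioc (2 : ℝ) 3 :=
  (exists_pow_mul_sub_two_eq_one n).choose_spec.1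

theorem pow_mul_sub_two : rootAboveTwo n ^ n * (rootAboveTwo n - 2) = 1 :=
  (exists_pow_mul_sub_two_eq_one n).choose_spec.2

theorem lt_three {n : ℕ} (hn : n ≠ 0) : rootAboveTwo n < 3 := by
  refine (mem_Ioc n).2.lt_of_ne fun h => ?_
  have := pow_mul_sub_two n
  rw [h] at this
  linarith [one_lt_pow₀ (by norm_num : (1 : ℝ) < 3) hn]

theorem eq_of_pow_mul_sub_two {n : ℕ} {x : ℝ} (hx : 2 ≤ x) (h : x ^ n * (x - 2) = 1) :
    x = rootAboveTwo n :=
  (strictMonoOn_pow_mul_sub_two n).injOn hx (mem_Ioc n).1.le (h.trans (pow_mul_sub_two n).symm)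

theorem norm_le {𝕜 : Type*} [NormedDivisionRing 𝕜] {n : ℕ} {z : 𝕜}
    (hz : z ^ (n + 1) - 2 * z ^ n - 1 = 0) : ‖z‖ ≤ rootAboveTwo n := by
  by_contra! hlt
  have hbound :=
    norm_pow_mul_norm_sub_two_le_one (eq_of_sub_eq_zero ((sub_sub _ _ _).symm.trans hz))
  have hmono := strictMonoOn_pow_mul_sub_two n (mem_Ioc n).1.le
    ((mem_Ioc n).1.le.trans hlt.le) hlt
  simp only [pow_mul_sub_two] at hmono
  linarith

theorem sub_two_le : rootAboveTwo n - 2 ≤ (1 / 2) ^ n := by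
  have h2 : (2 : ℝ) < rootAboveTwo n := (mem_Ioc n).1
  have : (2 : ℝ) ^ n * (rootAboveTwo n - 2) ≤ 1 := by
    rw [← pow_mul_sub_two n]
    gcongr
  rw [div_pow, one_pow, le_div_iff₀ (by positivity)]
  linarith

theorem tendsto : Tendsto rootAboveTwo atTop (𝓝 2) := by
  have hupper : Tendsto (fun n : ℕ => 2 + (1 / 2 : ℝ) ^ n) atTop (𝓝 2) := by
    simpa using tendsto_const_nhds.add
      (tendsto_pow_atTop_nhds_zero_of_lt_one (by norm_num : (0 : ℝ) ≤ 1 / 2) (by norm_num))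
  refine tendsto_of_tendsto_of_tendsto_of_le_of_le tendsto_const_nhds hupper
    (fun n => (mem_Ioc n).1.le) (fun n => ?_)
  linarith [sub_two_le n]

end rootAboveTwo

/-- For each `p ≥ 2` the polynomial `t^p − 2t^{p-1} − 1` has a unique real root
`ρ_p` in `(2, 3)`; this root is the largest root in absolute value, and
`ρ_p → 2` as `p → ∞`. -/
theorem root_pow_sub_two_pow_sub_one :
    ∃ ρ : ℕ → ℝ,
      (∀ p : ℕ, 2 ≤ p →
        ρ p ∈ Set.Ioo (2 : ℝ) 3 ∧
        (ρ p) ^ p - 2 * (ρ p) ^ (p - 1) - 1 = 0 ∧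
        (∀ x ∈ Set.Ioo (2 : ℝ) 3, x ^ p - 2 * x ^ (p - 1) - 1 = 0 → x = ρ p) ∧
        (∀ z : ℂ, z ^ p - 2 * z ^ (p - 1) - 1 = 0 → ‖z‖ ≤ ρ p)) ∧
      Tendsto ρ atTop (nhds 2) := by
  refine ⟨fun p => rootAboveTwo (p - 1), fun p hp => ?_,
    rootAboveTwo.tendsto.comp (tendsto_sub_atTop_nat 1)⟩
  obtain ⟨n, rfl⟩ : ∃ n, p = n + 1 := ⟨p - 1, by omega⟩
  simp only [Nat.add_sub_cancel, pow_succ_sub_two_mul_pow_sub_one_eq_zero_iff]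
  exact ⟨⟨(rootAboveTwo.mem_Ioc n).1, rootAboveTwo.lt_three (by omega)⟩,
    rootAboveTwo.pow_mul_sub_two n,
    fun x hx h => rootAboveTwo.eq_of_pow_mul_sub_two hx.1.le h,
    fun z hz => rootAboveTwo.norm_le (by rwa [pow_succ_sub_two_mul_pow_sub_one_eq_zero_iff])⟩
end

section
/- Let T be the join of trees T⁽¹⁾,…,T⁽ᵏ⁾ at vertices v_1,…,v_k. Then cox_T(t) = (t+1)·∏_{i=1}^k cox_{T⁽ⁱ⁾}(t) − t·∑_{i=1}^k P_i(t), where P_i(t) = cox_{T̃⁽ⁱ⁾}(t)·∏_{j≠i} cox_{T⁽ʲ⁾}(t) and T̃⁽ⁱ⁾ is the forest obtained from T⁽ⁱ⁾ by deleting the vertex v_i. -/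
open Matrix Polynomial

/-!
Write `Ǧ` for the upper unitriangular Gram matrix. Since `det Ǧᵀ = 1`, the Coxeter polynomial is
`det (t • Ǧᵀ + Ǧ)`, the determinant of a matrix supported on the graph: `t + 1` on the diagonal
and `-1`, `-t` at the two entries of each edge. Deleting the new vertex `v` of the join leaves a
block diagonal matrix whose blocks are those of the trees `T⁽ⁱ⁾`. The Schur complement at `v`
therefore only involves the diagonal entries of the inverse at the vertices `w i`, which by
Cramer's rule are `cox_{T̃⁽ⁱ⁾} / cox_{T⁽ⁱ⁾}`, and each edge `v — w i` contributes
`(-1) * (-t) = t`. Over `ℤ[t]` this is carried out in the fraction field, where the block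
determinants are invertible because they are monic.
-/

namespace Matrix

section

variable {n R : Type*} [Fintype n] [DecidableEq n] [CommRing R]

theorem charpoly_neg_mul_inv_eq_det (U W : Matrix n n R) (hW : W.det = 1) :
    (-(U * W⁻¹)).charpoly = ((X : R[X]) • W.map C + U.map C).det := by
  have hWinv : W⁻¹ * W = 1 := W.nonsing_inv_mul (by simp [hW])
  have hWC : (W.map C).det = 1 := by
    rw [← RingHom.mapMatrix_apply, ← RingHom.map_det, hW, map_one]
  rw [charpoly, ← mul_one (charmatrix _).det, ← hWC, ← det_mul, charmatrix, sub_mul,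
    RingHom.mapMatrix_apply, ← Matrix.map_mul, Matrix.neg_mul, Matrix.mul_assoc, hWinv,
    Matrix.mul_one, Matrix.map_neg _ (map_neg C), sub_neg_eq_add, scalar_apply,
    ← smul_eq_diagonal_mul]

theorem adjugate_apply_self (A : Matrix n n R) (e : n) :
    A.adjugate e e = (A.submatrix ((↑) : {a // a ≠ e} → n) ((↑) : {a // a ≠ e} → n)).det := by
  rw [adjugate_apply, twoBlockTriangular_det' _ (· = e) (by rintro i rfl j hj; simp [hj])]
  convert one_mul _ using 2
  · convert det_eq_elem_of_subsingleton _ (⟨e, rfl⟩ : {a // a = e})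
    simp [toSquareBlockProp]
  · ext x y
    simp [toSquareBlockProp, updateRow_ne x.2]

theorem inv_apply_self (A : Matrix n n R) (e : n) :
    A⁻¹ e e = Ring.inverse A.det *
      (A.submatrix ((↑) : {a // a ≠ e} → n) ((↑) : {a // a ≠ e} → n)).det := by
  rw [inv_def, smul_apply, adjugate_apply_self, smul_eq_mul]

theorem det_eq_det_mul_sub_sum (M : Matrix n n R) (v : n)
    (hD : IsUnit (M.submatrix ((↑) : {a // a ≠ v} → n) ((↑) : {a // a ≠ v} → n)).det) :
    M.det = (M.submatrix ((↑) : {a // a ≠ v} → n) ((↑) : {a // a ≠ v} → n)).det *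
      (M v v - ∑ x : {a // a ≠ v}, ∑ y : {a // a ≠ v}, M v x *
        (M.submatrix ((↑) : {a // a ≠ v} → n) ((↑) : {a // a ≠ v} → n))⁻¹ x y * M y v) := by
  set D := M.submatrix ((↑) : {a // a ≠ v} → n) ((↑) : {a // a ≠ v} → n)
  let := D.invertibleOfIsUnitDet hD
  have hblock : M.toBlock (fun a => ¬a = v) (fun a => ¬a = v) = D := rfl
  let : Fintype {a // a = v} := Subtype.fintype _
  rw [det_toBlock M (· = v), hblock, det_fromBlocks₂₂]
  congr 1
  convert det_eq_elem_of_subsingleton _ (⟨v, rfl⟩ : {a // a = v})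
  simp only [sub_apply, mul_apply, Finset.sum_mul, mul_assoc, invOf_eq_nonsing_inv]
  rw [Finset.sum_comm]
  rfl

variable {ι : Type*} [LinearOrder ι] {D : Matrix n n R} {b : n → ι}

theorem det_eq_prod_det_toSquareBlock [Fintype ι] (hD : ∀ x y, b x ≠ b y → D x y = 0) :
    D.det = ∏ i, (D.toSquareBlock b i).det :=
  BlockTriangular.det_fintype fun x y h => hD x y h.ne'

theorem inv_apply_eq_zero_of_ne (hD : ∀ x y, b x ≠ b y → D x y = 0) {x y : n}
    (hxy : b x ≠ b y) : D⁻¹ x y = 0 := by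
  by_cases h : IsUnit D.det
  · let := D.invertibleOfIsUnitDet h
    rcases hxy.lt_or_gt with hlt | hgt
    · exact blockTriangular_inv_of_blockTriangular (b := fun x => OrderDual.toDual (b x))
        (fun x y (h : b x < b y) => hD x y h.ne) hlt
    · exact blockTriangular_inv_of_blockTriangular (fun x y h => hD x y h.ne') hgt
  · simp [nonsing_inv_apply_not_isUnit _ h]

theorem toSquareBlock_inv (hD : ∀ x y, b x ≠ b y → D x y = 0) (h : IsUnit D.det) (i : ι) :
    D⁻¹.toSquareBlock b i = (D.toSquareBlock b i)⁻¹ := by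
  refine (inv_eq_right_inv ?_).symm
  have hmul := toBlock_mul_eq_add (fun x => b x = i) (fun x => b x = i) (fun x => b x = i) D D⁻¹
  have hzero : D.toBlock (fun x => b x = i) (fun x => ¬b x = i) = 0 := by
    ext x y
    exact hD _ _ (x.2.trans_ne (Ne.symm y.2))
  rwa [mul_nonsing_inv D h, toBlock_one_self, hzero, Matrix.zero_mul, add_zero, eq_comm] at hmul

theorem sum_sum_mul_inv_mul_eq_sum [Fintype ι] (hD : ∀ x y, b x ≠ b y → D x y = 0) {u : ι → n}
    (hu : ∀ i, b (u i) = i) {r c : n → R} (hr : ∀ x ∉ Set.range u, r x = 0)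
    (hc : ∀ y ∉ Set.range u, c y = 0) :
    ∑ x, ∑ y, r x * D⁻¹ x y * c y = ∑ i, r (u i) * c (u i) * D⁻¹ (u i) (u i) := by
  have hu_inj : Function.Injective u := fun i j h => by rw [← hu i, ← hu j, h]
  refine (Fintype.sum_of_injective u hu_inj _ _ (fun x hx => by simp [hr x hx]) fun i => ?_).symm
  rw [Fintype.sum_eq_single (u i) fun y hy => ?_]
  · ring
  by_cases hyu : y ∈ Set.range u
  · obtain ⟨j, rfl⟩ := hyu
    rw [inv_apply_eq_zero_of_ne hD (by rw [hu, hu]; exact fun h => hy (h ▸ rfl)), mul_zero,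
      zero_mul]
  · rw [hc y hyu, mul_zero]

end

section

variable {V R : Type*} [DecidableEq V] [CommRing R]

abbrev principalSubmatrix (M : Matrix V V R) (s : Finset V) : Matrix s s R :=
  M.submatrix (↑) (↑)

theorem det_principalSubmatrix_univ [Fintype V] (M : Matrix V V R) :
    (M.principalSubmatrix Finset.univ).det = M.det :=
  det_submatrix_equiv_self (Equiv.subtypeUnivEquiv Finset.mem_univ) M

theorem det_submatrix_ne_eq_det_principalSubmatrix_erase (M : Matrix V V R) {s : Finset V}
    {a : V} (ha : a ∈ s) :
    ((M.principalSubmatrix s).submatrix ((↑) : {x : s // x ≠ ⟨a, ha⟩} → s)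
      ((↑) : {x : s // x ≠ ⟨a, ha⟩} → s)).det = (M.principalSubmatrix (s.erase a)).det := by
  let e : {x : s // x ≠ ⟨a, ha⟩} ≃ s.erase a :=
    { toFun x := ⟨x.1, Finset.mem_erase.2 ⟨fun h => x.2 (Subtype.ext h), x.1.2⟩⟩
      invFun x := ⟨⟨x, Finset.mem_of_mem_erase x.2⟩,
        fun h => Finset.ne_of_mem_erase x.2 (congrArg Subtype.val h)⟩
      left_inv _ := rfl
      right_inv _ := rfl }
  rw [← det_submatrix_equiv_self e]
  rfl

variable [Fintype V] {k : ℕ} {v : V} {w : Fin k → V} {C : Fin k → Finset V}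

theorem det_eq_of_partition_of_isUnit (M : Matrix V V R)
    (hpart : ∀ a, a ≠ v → ∃! i, a ∈ C i) (hvC : ∀ i, v ∉ C i) (hwC : ∀ i, w i ∈ C i)
    (hcross : ∀ i j a b, i ≠ j → a ∈ C i → b ∈ C j → M a b = 0)
    (hrow : ∀ a, a ≠ v → (∀ i, a ≠ w i) → M v a = 0)
    (hcol : ∀ a, a ≠ v → (∀ i, a ≠ w i) → M a v = 0)
    (hdet : ∀ i, IsUnit (M.principalSubmatrix (C i)).det) :
    M.det = M v v * ∏ i, (M.principalSubmatrix (C i)).det -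
      ∑ i, M v (w i) * M (w i) v * (M.principalSubmatrix ((C i).erase (w i))).det *
        ∏ j ∈ Finset.univ.erase i, (M.principalSubmatrix (C j)).det := by
  choose b hb using fun x : {a // a ≠ v} => (hpart x x.2).exists
  have hmem_iff (x : {a // a ≠ v}) (i : Fin k) : x.1 ∈ C i ↔ b x = i :=
    ⟨(hpart x x.2).unique (hb x), fun h => h ▸ hb x⟩
  set D := M.submatrix ((↑) : {a // a ≠ v} → V) ((↑) : {a // a ≠ v} → V)
  have hD : ∀ x y, b x ≠ b y → D x y = 0 := fun x y h =>
    hcross _ _ _ _ h (hb x) (hb y)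
  let wS (i : Fin k) : {a // a ≠ v} := ⟨w i, fun h => hvC i (h ▸ hwC i)⟩
  have hbw (i : Fin k) : b (wS i) = i := (hmem_iff _ i).1 (hwC i)
  let E (i : Fin k) : {x // b x = i} ≃ C i :=
    { toFun x := ⟨x.1, (hmem_iff x.1 i).2 x.2⟩
      invFun a := ⟨⟨a, fun h => hvC i (h ▸ a.2)⟩, (hmem_iff _ i).1 a.2⟩
      left_inv _ := rfl
      right_inv _ := rfl }
  have hblock (i : Fin k) :
      D.toSquareBlock b i = (M.principalSubmatrix (C i)).submatrix (E i) (E i) := rfl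
  have hdetD : D.det = ∏ i, (M.principalSubmatrix (C i)).det := by
    simp_rw [det_eq_prod_det_toSquareBlock hD, hblock, det_submatrix_equiv_self]
  have hunit : IsUnit D.det := by
    rw [hdetD]
    exact IsUnit.prod_univ_iff.2 hdet
  have hdiag (i : Fin k) : D⁻¹ (wS i) (wS i) = Ring.inverse (M.principalSubmatrix (C i)).det *
      (M.principalSubmatrix ((C i).erase (w i))).det := by
    have h := congrFun₂ (toSquareBlock_inv hD hunit i) ⟨wS i, hbw i⟩ ⟨wS i, hbw i⟩
    rw [hblock, inv_submatrix_equiv] at h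
    rw [show D⁻¹ (wS i) (wS i) = _ from h, submatrix_apply, inv_apply_self]
    exact congrArg (_ * ·) (det_submatrix_ne_eq_det_principalSubmatrix_erase M (hwC i))
  have hsum := sum_sum_mul_inv_mul_eq_sum hD hbw (r := (M v ·)) (c := (M · v))
    (fun x hx => hrow x x.2 fun i h => hx ⟨i, Subtype.ext h.symm⟩)
    (fun y hy => hcol y y.2 fun i h => hy ⟨i, Subtype.ext h.symm⟩)
  rw [det_eq_det_mul_sub_sum M v hunit, hsum, hdetD, mul_sub, mul_comm, Finset.mul_sum]
  congr 1
  refine Finset.sum_congr rfl fun i _ => ?_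
  rw [hdiag, ← Finset.mul_prod_erase _ _ (Finset.mem_univ i)]
  linear_combination (M v (w i) * M (w i) v * (M.principalSubmatrix ((C i).erase (w i))).det *
    ∏ j ∈ Finset.univ.erase i, (M.principalSubmatrix (C j)).det) *
      Ring.inverse_mul_cancel _ (hdet i)

theorem det_eq_of_partition [IsDomain R] (M : Matrix V V R)
    (hpart : ∀ a, a ≠ v → ∃! i, a ∈ C i) (hvC : ∀ i, v ∉ C i) (hwC : ∀ i, w i ∈ C i)
    (hcross : ∀ i j a b, i ≠ j → a ∈ C i → b ∈ C j → M a b = 0)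
    (hrow : ∀ a, a ≠ v → (∀ i, a ≠ w i) → M v a = 0)
    (hcol : ∀ a, a ≠ v → (∀ i, a ≠ w i) → M a v = 0)
    (hdet : ∀ i, (M.principalSubmatrix (C i)).det ≠ 0) :
    M.det = M v v * ∏ i, (M.principalSubmatrix (C i)).det -
      ∑ i, M v (w i) * M (w i) v * (M.principalSubmatrix ((C i).erase (w i))).det *
        ∏ j ∈ Finset.univ.erase i, (M.principalSubmatrix (C j)).det := by
  let φ := algebraMap R (FractionRing R)
  have hφ (s : Finset V) :
      φ (M.principalSubmatrix s).det = ((M.map φ).principalSubmatrix s).det := by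
    rw [RingHom.map_det]
    rfl
  apply IsFractionRing.injective R (FractionRing R)
  simp only [map_sub, map_mul, map_sum, map_prod, RingHom.map_det]
  exact det_eq_of_partition_of_isUnit (M.map φ) hpart hvC hwC
    (fun i j a b hij ha hb => by simp [hcross i j a b hij ha hb])
    (fun a ha haw => by simp [hrow a ha haw]) (fun a ha haw => by simp [hcol a ha haw])
    fun i => by
      rw [← hφ]
      exact ((map_ne_zero_iff _ (IsFractionRing.injective R _)).2 (hdet i)).isUnit

end

end Matrix

namespace SimpleGraph

variable {V : Type*} {G : SimpleGraph V} {v x y u : V}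

theorem Reachable.ne_of_deleteIncidenceSet (h : (G.deleteIncidenceSet v).Reachable x u)
    (hx : x ≠ v) : u ≠ v := by
  rintro rfl
  obtain ⟨p⟩ := h.symm
  cases p with
  | nil => exact hx rfl
  | cons h _ => exact (deleteIncidenceSet_adj.1 h).2.1 rfl

theorem Walk.reachable_deleteIncidenceSet (p : G.Walk x u) (hp : v ∉ p.support) :
    (G.deleteIncidenceSet v).Reachable x u := by
  induction p with
  | nil => rfl
  | cons h q ih =>
    rw [support_cons, List.mem_cons, not_or] at hp
    have hadj : (G.deleteIncidenceSet v).Adj _ _ :=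
      deleteIncidenceSet_adj.2 ⟨h, Ne.symm hp.1, fun h' => hp.2 (h' ▸ q.start_mem_support)⟩
    exact hadj.reachable.trans (ih hp.2)

theorem Connected.exists_adj_reachable_deleteIncidenceSet (hG : G.Connected) (hu : u ≠ v) :
    ∃ x, G.Adj v x ∧ (G.deleteIncidenceSet v).Reachable x u := by
  classical
  obtain ⟨p, hp⟩ := (hG v u).exists_isPath
  cases p with
  | nil => exact absurd rfl hu
  | cons h q =>
    rw [Walk.cons_isPath_iff] at hp
    exact ⟨_, h, q.reachable_deleteIncidenceSet hp.2⟩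

theorem IsAcyclic.eq_of_reachable_deleteIncidenceSet (hG : G.IsAcyclic) (hx : G.Adj v x)
    (hy : G.Adj v y) (h : (G.deleteIncidenceSet v).Reachable x y) : x = y := by
  by_contra hxy
  refine isAcyclic_iff_forall_adj_isBridge.1 hG hy ?_
  have hle : G.deleteIncidenceSet v ≤ G.deleteEdges {s(v, y)} :=
    deleteEdges_anti (Set.singleton_subset_iff.2 (G.mk'_mem_incidenceSet_left_iff.2 hy))
  have hvx : (G.deleteEdges {s(v, y)}).Adj v x := by
    simp [hx, hxy, hx.ne']
  exact hvx.reachable.trans (h.mono hle)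

section Join

variable {k : ℕ} {w : Fin k → V} {C : Fin k → Finset V}

theorem eq_of_mem_of_mem_of_isAcyclic (hG : G.IsAcyclic) (hw : Function.Injective w)
    (hvw : ∀ i, G.Adj v (w i))
    (hC : ∀ i u, u ∈ C i ↔ (G.deleteIncidenceSet v).Reachable (w i) u)
    {i j : Fin k} (hi : u ∈ C i) (hj : u ∈ C j) : i = j :=
  hw <| hG.eq_of_reachable_deleteIncidenceSet (hvw i) (hvw j)
    (((hC i u).1 hi).trans ((hC j u).1 hj).symm)

theorem existsUnique_mem_of_isTree (hG : G.IsTree) (hw : Function.Injective w)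
    (hadj : ∀ u, G.Adj v u ↔ ∃ i, u = w i)
    (hC : ∀ i u, u ∈ C i ↔ (G.deleteIncidenceSet v).Reachable (w i) u) (hu : u ≠ v) :
    ∃! i, u ∈ C i := by
  obtain ⟨x, hvx, hxu⟩ := hG.connected.exists_adj_reachable_deleteIncidenceSet hu
  obtain ⟨i, rfl⟩ := (hadj x).1 hvx
  have hvw (j : Fin k) : G.Adj v (w j) := (hadj _).2 ⟨j, rfl⟩
  exact ⟨i, (hC i u).2 hxu, fun j hj => eq_of_mem_of_mem_of_isAcyclic hG.isAcyclic hw hvw hC hj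
    ((hC i u).2 hxu)⟩

theorem not_adj_of_mem_of_mem (hG : G.IsAcyclic) (hw : Function.Injective w)
    (hvw : ∀ i, G.Adj v (w i))
    (hC : ∀ i u, u ∈ C i ↔ (G.deleteIncidenceSet v).Reachable (w i) u)
    {i j : Fin k} (hij : i ≠ j) (hx : x ∈ C i) (hy : y ∈ C j) : ¬G.Adj x y := by
  intro hxy
  have hxv := ((hC i x).1 hx).ne_of_deleteIncidenceSet (hvw i).ne'
  have hyv := ((hC j y).1 hy).ne_of_deleteIncidenceSet (hvw j).ne'
  have hyi : y ∈ C i :=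
    (hC i y).2 (((hC i x).1 hx).trans (deleteIncidenceSet_adj.2 ⟨hxy, hxv, hyv⟩).reachable)
  exact hij (eq_of_mem_of_mem_of_isAcyclic hG hw hvw hC hyi hy)

end Join

end SimpleGraph

section Coxeter

variable {V : Type} [LinearOrder V] (G : SimpleGraph V) [DecidableRel G.Adj]

noncomputable def coxMat : Matrix V V ℤ[X] :=
  fun a b => if a = b then X + 1 else if G.Adj a b then (if a < b then -1 else -X) else 0

@[simp]
theorem coxMat_self (a : V) : coxMat G a a = X + 1 := if_pos rfl

variable {G} in
theorem coxMat_of_not_adj {a b : V} (hab : a ≠ b) (h : ¬G.Adj a b) : coxMat G a b = 0 := by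
  simp [coxMat, hab, h]

variable {G} in
theorem coxMat_mul_coxMat_of_adj {a b : V} (h : G.Adj a b) : coxMat G a b * coxMat G b a = X := by
  rcases lt_or_gt_of_ne h.ne with hab | hab
  · simp [coxMat, h, h.symm, h.ne, h.ne', hab, hab.not_gt]
  · simp [coxMat, h, h.symm, h.ne, h.ne', hab, hab.not_gt]

variable [Fintype V]

theorem coxOf_eq_det_s18 (s : Finset V) : coxOf G s = ((coxMat G).principalSubmatrix s).det := by
  rw [coxOf, coxPoly, charpoly_neg_mul_inv_eq_det]
  · congr 1
    ext i j : 1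
    rcases lt_trichotomy i j with h | rfl | h
    · simp [coxMat, h, h.ne, h.ne', h.not_gt, Subtype.coe_lt_coe.mpr h, apply_ite Neg.neg]
    · simp [coxMat, add_comm]
    · simp [coxMat, h, h.ne, h.ne', h.not_gt, G.adj_comm, apply_ite Neg.neg]
  · rw [det_transpose, det_of_isUpperTriangular]
    · simp
    · intro i j (hij : j < i)
      simp [hij.ne', hij.not_gt]

theorem coxOf_ne_zero (s : Finset V) : coxOf G s ≠ 0 :=
  (charpoly_monic _).ne_zero

end Coxeter

/- `C i` is the vertex set of `T⁽ⁱ⁾`: the component of `w i` in the forest obtained from `G`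
by deleting the edges at the new vertex `v`. -/
/-- The Coxeter polynomial of the join `T` of trees `T⁽¹⁾,…,T⁽ᵏ⁾` at vertices
`w 1,…,w k` satisfies
`cox_T(t) = (t+1)·∏ᵢ cox_{T⁽ⁱ⁾}(t) − t·∑ᵢ Pᵢ(t)`, where
`Pᵢ(t) = cox_{T̃⁽ⁱ⁾}(t)·∏_{j≠i} cox_{T⁽ʲ⁾}(t)` and `T̃⁽ⁱ⁾ = T⁽ⁱ⁾ − w i`. -/
theorem coxPoly_join {V : Type} [Fintype V] [LinearOrder V]
    (G : SimpleGraph V) [DecidableRel G.Adj] (hT : G.IsTree)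
    (k : ℕ) (v : V) (w : Fin k → V) (hw : Function.Injective w)
    (hadj : ∀ u, G.Adj v u ↔ ∃ i, u = w i)
    (C : Fin k → Finset V)
    (hC : ∀ i u, u ∈ C i ↔ (G.deleteEdges (G.incidenceSet v)).Reachable (w i) u) :
    coxOf G Finset.univ =
      (X + 1) * ∏ i, coxOf G (C i) -
        X * ∑ i, (coxOf G ((C i).erase (w i)) *
          ∏ j ∈ Finset.univ.erase i, coxOf G (C j)) := by
  have hvw (i : Fin k) : G.Adj v (w i) := (hadj _).2 ⟨i, rfl⟩
  have hvC (i : Fin k) : v ∉ C i := fun hv =>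
    ((hC i v).1 hv).ne_of_deleteIncidenceSet (hvw i).ne' rfl
  have hnadj (a : V) (haw : ∀ i, a ≠ w i) : ¬G.Adj v a := fun h => by
    obtain ⟨i, rfl⟩ := (hadj a).1 h
    exact haw i rfl
  have hdisj {i j : Fin k} {a : V} (hi : a ∈ C i) (hj : a ∈ C j) : i = j :=
    SimpleGraph.eq_of_mem_of_mem_of_isAcyclic hT.isAcyclic hw hvw hC hi hj
  rw [coxOf_eq_det_s18, det_principalSubmatrix_univ, det_eq_of_partition (coxMat G)
    (fun u hu => SimpleGraph.existsUnique_mem_of_isTree hT hw hadj hC hu) hvC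
    (fun i => (hC i _).2 .rfl)
    (fun i j a b hij ha hb => coxMat_of_not_adj (fun hab => hij (hdisj ha (hab ▸ hb)))
      (SimpleGraph.not_adj_of_mem_of_mem hT.isAcyclic hw hvw hC hij ha hb))
    (fun a hav haw => coxMat_of_not_adj (Ne.symm hav) (hnadj a haw))
    (fun a hav haw => coxMat_of_not_adj hav fun h => hnadj a haw h.symm)
    (fun i => coxOf_eq_det_s18 G (C i) ▸ coxOf_ne_zero G (C i))]
  simp only [← coxOf_eq_det_s18, coxMat_self, coxMat_mul_coxMat_of_adj (hvw _), Finset.mul_sum,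
    mul_assoc]
end
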